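/- arXiv:2407.15292 — 4 statements merged into one kernel-verified Lean document; each statement's English description precedes it below -/
import Mathlib

section
/- Fix constants λ₀ > 0 and p > 1, and define t_0 := 0, t_{n+1} := t_n + 1/(n+1)^p, λ_n := n^{2(p+1)} + λ₀ for n ∈ ℕ, and s_0 := 0, s_n := Σ_{j=0}^{n-1} λ_j (t_{j+1} − t_j) for n ≥ 1. Then for every natural number n ≥ max{1, λ₀} one has s_n/(n + √(λ_{n+1})) ≥ (n−1)^{2(p+1)} / (2√2 · (n+1)^{2p+1}). -/
/-!
The sum `s n` is at least its last term `λ_{n-1} / n^p ≥ (n-1)^{2(p+1)} / n^p`, while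
`λ_{n+1} ≤ 2 (n+1)^{2(p+1)}` (as `λ₀ ≤ n`) bounds the denominator by `2√2 (n+1)^{p+1}`.
Since `n^p ≤ (n+1)^p`, the quotient of the two bounds is at least the claimed one.
-/

open Finset Real

section WeightedSum

variable {lam0 p q : ℝ} {t lam : ℕ → ℝ}

lemma mul_sub_eq_div_rpow (ht : ∀ n : ℕ, t (n + 1) = t n + 1 / ((n : ℝ) + 1) ^ p)
    (hlam : ∀ n : ℕ, lam n = (n : ℝ) ^ q + lam0) (j : ℕ) :
    lam j * (t (j + 1) - t j) = ((j : ℝ) ^ q + lam0) / ((j : ℝ) + 1) ^ p := by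
  rw [hlam j, ht j]
  ring

lemma sub_one_rpow_div_le_sum (hlam0 : 0 ≤ lam0)
    (ht : ∀ n : ℕ, t (n + 1) = t n + 1 / ((n : ℝ) + 1) ^ p)
    (hlam : ∀ n : ℕ, lam n = (n : ℝ) ^ q + lam0) {n : ℕ} (hn : 1 ≤ n) :
    ((n : ℝ) - 1) ^ q / (n : ℝ) ^ p ≤ ∑ j ∈ range n, lam j * (t (j + 1) - t j) := by
  have hterm_nonneg : ∀ j ∈ range n, 0 ≤ lam j * (t (j + 1) - t j) := fun j _ => by
    rw [mul_sub_eq_div_rpow ht hlam]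
    positivity
  have hlast := single_le_sum hterm_nonneg (mem_range.mpr (Nat.sub_one_lt_of_le hn le_rfl))
  rw [mul_sub_eq_div_rpow ht hlam, Nat.cast_pred hn, sub_add_cancel] at hlast
  refine le_trans ?_ hlast
  gcongr
  linarith

end WeightedSum

lemma add_sqrt_rpow_add_le {x c q : ℝ} (hx : 0 ≤ x) (hq : 1 ≤ q) (hc : c ≤ x) :
    x + √((x + 1) ^ (2 * q) + c) ≤ 2 * √2 * (x + 1) ^ q := by
  set X := (x + 1) ^ q
  have hX : x + 1 ≤ X := self_le_rpow_of_one_le (by linarith) hq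
  have hsq : (x + 1) ^ (2 * q) = X ^ 2 := by
    rw [mul_comm, rpow_mul (by linarith), rpow_two]
  have hsqrt2 : 1 ≤ √2 := by
    rw [one_le_sqrt]
    norm_num
  have hsqrt : √(X ^ 2 + c) ≤ √2 * X := by
    calc √(X ^ 2 + c) ≤ √(2 * X ^ 2) := sqrt_le_sqrt (by nlinarith)
      _ = √2 * X := by rw [sqrt_mul zero_le_two, sqrt_sq (by linarith)]
  rw [hsq]
  nlinarith

theorem stmt_1_general (lam0 p : ℝ) (hlam0 : 0 < lam0) (hp : 1 < p)
    (t lam s : ℕ → ℝ)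
    (ht : ∀ n : ℕ, t (n + 1) = t n + 1 / ((n : ℝ) + 1) ^ p)
    (hlam : ∀ n : ℕ, lam n = (n : ℝ) ^ (2 * (p + 1)) + lam0)
    (hs : ∀ n : ℕ, s n = ∑ j ∈ Finset.range n, lam j * (t (j + 1) - t j)) :
    ∀ n : ℕ, max 1 lam0 ≤ (n : ℝ) →
      s n / ((n : ℝ) + Real.sqrt (lam (n + 1))) ≥
        ((n : ℝ) - 1) ^ (2 * (p + 1)) / (2 * Real.sqrt 2 * ((n : ℝ) + 1) ^ (2 * p + 1)) := by
  intro n hn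
  have hn1 : (1 : ℝ) ≤ n := le_of_max_le_left hn
  have hs_ge := sub_one_rpow_div_le_sum hlam0.le ht hlam (n := n) (by exact_mod_cast hn1)
  rw [← hs] at hs_ge
  have hden : (n : ℝ) + √(lam (n + 1)) ≤ 2 * √2 * ((n : ℝ) + 1) ^ (p + 1) := by
    rw [hlam, Nat.cast_succ]
    exact add_sqrt_rpow_add_le (by linarith) (by linarith) (le_of_max_le_right hn)
  have hsplit : ((n : ℝ) + 1) ^ (2 * p + 1) = ((n : ℝ) + 1) ^ p * ((n : ℝ) + 1) ^ (p + 1) := by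
    rw [← rpow_add (by positivity)]
    ring_nf
  have hmono : (n : ℝ) ^ p ≤ ((n : ℝ) + 1) ^ p := by gcongr; linarith
  have hA : 0 ≤ ((n : ℝ) - 1) ^ (2 * (p + 1)) := rpow_nonneg (by linarith) _
  rw [ge_iff_le]
  calc ((n : ℝ) - 1) ^ (2 * (p + 1)) / (2 * √2 * ((n : ℝ) + 1) ^ (2 * p + 1))
      ≤ ((n : ℝ) - 1) ^ (2 * (p + 1)) / ((n : ℝ) ^ p * (2 * √2 * ((n : ℝ) + 1) ^ (p + 1))) := by
        rw [hsplit]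
        apply div_le_div_of_nonneg_left hA (by positivity)
        nlinarith [show 0 < 2 * √2 * ((n : ℝ) + 1) ^ (p + 1) by positivity]
    _ = ((n : ℝ) - 1) ^ (2 * (p + 1)) / (n : ℝ) ^ p / (2 * √2 * ((n : ℝ) + 1) ^ (p + 1)) :=
        (div_div _ _ _).symm
    _ ≤ s n / ((n : ℝ) + √(lam (n + 1))) :=
        div_le_div₀ (le_trans (by positivity) hs_ge) hs_ge (by positivity) hden

/-- With `t 0 = 0`, `t (n+1) = t n + 1/(n+1)^p`, `λ n = n^(2(p+1)) + λ₀`, and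
`s n = ∑_{j<n} λ j (t (j+1) - t j)`, for every `n ≥ max {1, λ₀}` one has
`s n / (n + √(λ (n+1))) ≥ (n-1)^(2(p+1)) / (2√2 (n+1)^(2p+1))`. -/
theorem stmt_1 (lam0 p : ℝ) (hlam0 : 0 < lam0) (hp : 1 < p)
    (t lam s : ℕ → ℝ)
    (ht0 : t 0 = 0)
    (ht : ∀ n : ℕ, t (n + 1) = t n + 1 / ((n : ℝ) + 1) ^ p)
    (hlam : ∀ n : ℕ, lam n = (n : ℝ) ^ (2 * (p + 1)) + lam0)
    (hs : ∀ n : ℕ, s n = ∑ j ∈ Finset.range n, lam j * (t (j + 1) - t j)) :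
    ∀ n : ℕ, max 1 lam0 ≤ (n : ℝ) →
      s n / ((n : ℝ) + Real.sqrt (lam (n + 1))) ≥
        ((n : ℝ) - 1) ^ (2 * (p + 1)) / (2 * Real.sqrt 2 * ((n : ℝ) + 1) ^ (2 * p + 1)) :=
  stmt_1_general lam0 p hlam0 hp t lam s ht hlam hs
end

section
/- Let D := {(x,y) ∈ ℝ² : 0 ≤ y ≤ x ≤ 1} and let k : D → ℝ be continuous. Then there exists a continuous function l : D → ℝ such that for all (x,y) ∈ D both resolvent identities hold: l(x,y) = k(x,y) + ∫_y^x l(x,s)·k(s,y) ds and l(x,y) = k(x,y) + ∫_y^x k(x,s)·l(s,y) ds; moreover sup_{D} |l| ≤ (sup_{D} |k|)·e^{sup_{D}|k|}. -/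
/-!
The resolvent is the Neumann series `l = ∑ kₙ` of the iterated kernels `k₀ = k`,
`kₙ₊₁ = k ∗ kₙ`, where `(a ∗ b)(x, y) = ∫_y^x a(x, s) b(s, y) ds`. By induction
`|kₙ(x, y)| ≤ M^(n+1) (x - y)^n / n!` with `M = sup |k|`, so the series converges locally
uniformly on `y ≤ x` and `|l(x, y)| ≤ M e^(M (x - y))`. Since `∗` is associative (Fubini on a
triangle), also `kₙ₊₁ = kₙ ∗ k`; summing `kₙ₊₁` termwise gives `l - k = k ∗ l = l ∗ k`.
To have globally continuous kernels, `k` is first composed with a continuous retraction of the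
plane onto `D`.
-/

open MeasureTheory Set Function
open scoped Nat Interval

/- Both sides integrate `F` over `{y < t ≤ s ≤ x}`: extend `F` by zero off `{t ≤ s}` and swap the
order of integration over the square `(y, x]²`. -/
theorem integral_integral_triangle {F : ℝ → ℝ → ℝ} (hF : Continuous (uncurry F)) {x y : ℝ}
    (hyx : y ≤ x) :
    ∫ s in y..x, ∫ t in y..s, F s t = ∫ t in y..x, ∫ s in t..x, F s t := by
  set H : ℝ × ℝ → ℝ := {p : ℝ × ℝ | p.2 ≤ p.1}.indicator (uncurry F)
  have hH : Integrable H ((volume.restrict (Ioc y x)).prod (volume.restrict (Ioc y x))) := by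
    rw [Measure.prod_restrict]
    refine Integrable.indicator ?_ (isClosed_le continuous_snd continuous_fst).measurableSet
    exact (hF.continuousOn.integrableOn_compact (isCompact_Icc.prod isCompact_Icc)).mono_set
      (prod_mono Ioc_subset_Icc_self Ioc_subset_Icc_self)
  have inner_left : ∀ s ∈ Ioc y x, ∫ t in Ioc y x, H (s, t) = ∫ t in y..s, F s t := by
    intro s hs
    have : (fun t => H (s, t)) = (Iic s).indicator (F s) := by
      ext t; by_cases h : t ≤ s <;> simp [H, h]
    rw [this, setIntegral_indicator measurableSet_Iic, Ioc_inter_Iic, min_eq_right hs.2,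
      intervalIntegral.integral_of_le hs.1.le]
  have inner_right : ∀ t ∈ Ioc y x, ∫ s in Ioc y x, H (s, t) = ∫ s in t..x, F s t := by
    intro t ht
    have : (fun s => H (s, t)) = (Ici t).indicator (fun s => F s t) := by
      ext s; by_cases h : t ≤ s <;> simp [H, h]
    have hI : Ioc y x ∩ Ici t = Icc t x := by
      ext s; simp only [mem_inter_iff, mem_Ioc, mem_Ici, mem_Icc]
      exact ⟨fun h => ⟨h.2, h.1.2⟩, fun h => ⟨⟨ht.1.trans_le h.1, h.2⟩, h.1⟩⟩
    rw [this, setIntegral_indicator measurableSet_Ici, hI, integral_Icc_eq_integral_Ioc,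
      intervalIntegral.integral_of_le ht.2]
  rw [intervalIntegral.integral_of_le hyx, intervalIntegral.integral_of_le hyx,
    ← setIntegral_congr_fun measurableSet_Ioc inner_left,
    ← setIntegral_congr_fun measurableSet_Ioc inner_right]
  exact integral_integral_swap hH

theorem intervalIntegral.hasSum_integral_of_norm_le {ι E : Type*} [Countable ι]
    [NormedAddCommGroup E] [NormedSpace ℝ E] {F : ι → ℝ → E} {f : ℝ → E} {c : ι → ℝ} {a b : ℝ}
    (hF : ∀ n, Continuous (F n)) (hc : Summable c)
    (hFc : ∀ n, ∀ t ∈ Ι a b, ‖F n t‖ ≤ c n) (hf : ∀ t ∈ Ι a b, HasSum (fun n => F n t) (f t)) :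
    HasSum (fun n => ∫ t in a..b, F n t) (∫ t in a..b, f t) :=
  intervalIntegral.hasSum_integral_of_dominated_convergence (fun n _ => c n)
    (fun n => (hF n).aestronglyMeasurable) (fun n => ae_of_all _ (hFc n))
    (ae_of_all _ fun _ _ => hc) intervalIntegrable_const (ae_of_all _ hf)

theorem hasSum_pow_succ_mul_pow_div_factorial (M t : ℝ) :
    HasSum (fun n => M ^ (n + 1) * t ^ n / n !) (M * Real.exp (M * t)) := by
  have := (NormedSpace.expSeries_div_hasSum_exp (M * t)).mul_left M
  rw [← Real.exp_eq_exp_ℝ] at this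
  exact this.congr_fun fun n => by ring

noncomputable def volterraComp (a b : ℝ × ℝ → ℝ) (p : ℝ × ℝ) : ℝ :=
  ∫ s in p.2..p.1, a (p.1, s) * b (s, p.2)

theorem volterraComp_congr {a a' b b' : ℝ × ℝ → ℝ} {x y : ℝ}
    (ha : ∀ s ∈ uIcc y x, a (x, s) = a' (x, s)) (hb : ∀ s ∈ uIcc y x, b (s, y) = b' (s, y)) :
    volterraComp a b (x, y) = volterraComp a' b' (x, y) :=
  intervalIntegral.integral_congr fun s hs => by simp only [ha s hs, hb s hs]

theorem continuous_volterraComp {a b : ℝ × ℝ → ℝ} (ha : Continuous a) (hb : Continuous b) :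
    Continuous (volterraComp a b) := by
  have hF : Continuous (uncurry fun (p : ℝ × ℝ) (s : ℝ) => a (p.1, s) * b (s, p.2)) := by
    fun_prop
  have hsplit : volterraComp a b = fun p => (∫ s in (0 : ℝ)..p.1, a (p.1, s) * b (s, p.2)) -
      ∫ s in (0 : ℝ)..p.2, a (p.1, s) * b (s, p.2) := by
    ext p
    have hp := (hF.uncurry_left p).intervalIntegrable (μ := volume)
    exact (intervalIntegral.integral_interval_sub_left (hp _ _) (hp _ _)).symm
  rw [hsplit]
  exact (intervalIntegral.continuous_parametric_intervalIntegral_of_continuous hF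
    continuous_fst).sub
    (intervalIntegral.continuous_parametric_intervalIntegral_of_continuous hF continuous_snd)

theorem volterraComp_assoc {a b c : ℝ × ℝ → ℝ} (ha : Continuous a) (hb : Continuous b)
    (hc : Continuous c) {x y : ℝ} (hyx : y ≤ x) :
    volterraComp (volterraComp a b) c (x, y) = volterraComp a (volterraComp b c) (x, y) := by
  have hF : Continuous (uncurry fun t s => a (x, t) * b (t, s) * c (s, y)) := by fun_prop
  simp only [volterraComp, ← intervalIntegral.integral_mul_const,
    ← intervalIntegral.integral_const_mul, ← mul_assoc]
  exact (integral_integral_triangle hF hyx).symm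

theorem integral_sub_pow_div_factorial (n : ℕ) (x y : ℝ) :
    ∫ s in y..x, (s - y) ^ n / n ! = (x - y) ^ (n + 1) / (n + 1)! := by
  rw [intervalIntegral.integral_div, intervalIntegral.integral_comp_sub_right (· ^ n), integral_pow,
    sub_self, zero_pow n.succ_ne_zero, sub_zero, Nat.factorial_succ]
  push_cast
  field_simp

noncomputable def volterraPow (k : ℝ × ℝ → ℝ) : ℕ → ℝ × ℝ → ℝ
  | 0 => k
  | n + 1 => volterraComp k (volterraPow k n)

noncomputable def resolventKernel (k : ℝ × ℝ → ℝ) (p : ℝ × ℝ) : ℝ :=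
  ∑' n, volterraPow k n p

section Resolvent

variable {k : ℝ × ℝ → ℝ} {M : ℝ}

theorem continuous_volterraPow (hk : Continuous k) : ∀ n, Continuous (volterraPow k n)
  | 0 => hk
  | n + 1 => continuous_volterraComp hk (continuous_volterraPow hk n)

theorem volterraPow_succ' (hk : Continuous k) (n : ℕ) {x y : ℝ} (hyx : y ≤ x) :
    volterraPow k (n + 1) (x, y) = volterraComp (volterraPow k n) k (x, y) := by
  induction n generalizing x with
  | zero => rfl
  | succ n ih =>
    calc volterraPow k (n + 2) (x, y)
        = volterraComp k (volterraComp (volterraPow k n) k) (x, y) :=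
          volterraComp_congr (fun _ _ => rfl) fun s hs => ih (uIcc_of_le hyx ▸ hs).1
      _ = volterraComp (volterraPow k (n + 1)) k (x, y) :=
          (volterraComp_assoc hk (continuous_volterraPow hk n) hk hyx).symm

theorem abs_volterraPow_le (hk : Continuous k) (hkM : ∀ p, |k p| ≤ M)
    (n : ℕ) {x y : ℝ} (hyx : y ≤ x) :
    |volterraPow k n (x, y)| ≤ M ^ (n + 1) * (x - y) ^ n / n ! := by
  have hM : 0 ≤ M := (abs_nonneg _).trans (hkM 0)
  induction n generalizing x with
  | zero => simpa [volterraPow] using hkM (x, y)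
  | succ n ih =>
    have hcont := continuous_volterraPow hk n
    calc |volterraPow k (n + 1) (x, y)|
        ≤ ∫ s in y..x, |k (x, s) * volterraPow k n (s, y)| :=
          intervalIntegral.abs_integral_le_integral_abs hyx
      _ ≤ ∫ s in y..x, M * (M ^ (n + 1) * (s - y) ^ n / n !) := by
          refine intervalIntegral.integral_mono_on hyx
            ((by fun_prop : Continuous _).intervalIntegrable _ _)
            ((by fun_prop : Continuous _).intervalIntegrable _ _) fun s hs => ?_
          rw [abs_mul]
          exact mul_le_mul (hkM _) (ih hs.1) (abs_nonneg _) hM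
      _ = M ^ (n + 2) * ∫ s in y..x, (s - y) ^ n / n ! := by
          rw [← intervalIntegral.integral_const_mul]
          congr 1 with s
          ring
      _ = M ^ (n + 2) * (x - y) ^ (n + 1) / (n + 1)! := by
          rw [integral_sub_pow_div_factorial, mul_div_assoc]

theorem abs_volterraPow_le_of_sub_le (hk : Continuous k) (hkM : ∀ p, |k p| ≤ M)
    (n : ℕ) {x y t : ℝ} (hyx : y ≤ x) (ht : x - y ≤ t) :
    |volterraPow k n (x, y)| ≤ M ^ (n + 1) * t ^ n / n ! := by
  have hM : 0 ≤ M := (abs_nonneg _).trans (hkM 0)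
  refine (abs_volterraPow_le hk hkM n hyx).trans ?_
  gcongr

theorem hasSum_volterraPow (hk : Continuous k) (hkM : ∀ p, |k p| ≤ M)
    {x y : ℝ} (hyx : y ≤ x) :
    HasSum (fun n => volterraPow k n (x, y)) (resolventKernel k (x, y)) :=
  (Summable.of_norm_bounded (hasSum_pow_succ_mul_pow_div_factorial M (x - y)).summable
    fun n => abs_volterraPow_le hk hkM n hyx).hasSum

theorem abs_resolventKernel_le (hk : Continuous k) (hkM : ∀ p, |k p| ≤ M)
    {x y : ℝ} (hyx : y ≤ x) :
    |resolventKernel k (x, y)| ≤ M * Real.exp (M * (x - y)) :=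
  (hasSum_volterraPow hk hkM hyx).norm_le_of_bounded
    (hasSum_pow_succ_mul_pow_div_factorial M (x - y)) fun n => abs_volterraPow_le hk hkM n hyx

theorem continuousOn_resolventKernel (hk : Continuous k) (hkM : ∀ p, |k p| ≤ M)
    (R : ℝ) :
    ContinuousOn (resolventKernel k) {p | p.2 ≤ p.1 ∧ p.1 - p.2 ≤ R} :=
  continuousOn_tsum (fun n => (continuous_volterraPow hk n).continuousOn)
    (hasSum_pow_succ_mul_pow_div_factorial M R).summable
    fun n _ hp => abs_volterraPow_le_of_sub_le hk hkM n hp.1 hp.2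

theorem hasSum_volterraPow_succ (hk : Continuous k) (hkM : ∀ p, |k p| ≤ M)
    {x y : ℝ} (hyx : y ≤ x) :
    HasSum (fun n => volterraPow k (n + 1) (x, y)) (resolventKernel k (x, y) - k (x, y)) := by
  simpa [volterraPow] using (hasSum_nat_add_iff' 1).mpr (hasSum_volterraPow hk hkM hyx)

theorem resolventKernel_eq_add_resolventKernel_comp (hk : Continuous k) (hkM : ∀ p, |k p| ≤ M)
    {x y : ℝ} (hyx : y ≤ x) :
    resolventKernel k (x, y) = k (x, y) + volterraComp (resolventKernel k) k (x, y) := by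
  have hsum : HasSum (fun n => volterraComp (volterraPow k n) k (x, y))
      (volterraComp (resolventKernel k) k (x, y)) := by
    have hI : Ι y x = Ioc y x := uIoc_of_le hyx
    refine intervalIntegral.hasSum_integral_of_norm_le (a := y) (b := x)
      (c := fun n => M ^ (n + 1) * (x - y) ^ n / n ! * M)
      (fun n => by have := continuous_volterraPow hk n; fun_prop)
      ((hasSum_pow_succ_mul_pow_div_factorial M (x - y)).summable.mul_right M)
      (fun n s hs => ?_) fun s hs => (hasSum_volterraPow hk hkM (hI ▸ hs).2).mul_right _
    rw [hI] at hs
    have hbound := abs_volterraPow_le_of_sub_le hk hkM n hs.2 (t := x - y) (by linarith [hs.1])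
    rw [norm_mul]
    exact mul_le_mul hbound (hkM _) (abs_nonneg _) ((abs_nonneg _).trans hbound)
  have hsucc := hasSum_volterraPow_succ hk hkM hyx
  simp only [volterraPow_succ' hk _ hyx] at hsucc
  linarith [hsucc.unique hsum]

theorem resolventKernel_eq_add_comp_resolventKernel (hk : Continuous k) (hkM : ∀ p, |k p| ≤ M)
    {x y : ℝ} (hyx : y ≤ x) :
    resolventKernel k (x, y) = k (x, y) + volterraComp k (resolventKernel k) (x, y) := by
  have hM : 0 ≤ M := (abs_nonneg _).trans (hkM 0)
  have hsum : HasSum (fun n => volterraComp k (volterraPow k n) (x, y))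
      (volterraComp k (resolventKernel k) (x, y)) := by
    have hI : Ι y x = Ioc y x := uIoc_of_le hyx
    refine intervalIntegral.hasSum_integral_of_norm_le (a := y) (b := x)
      (c := fun n => M * (M ^ (n + 1) * (x - y) ^ n / n !))
      (fun n => by have := continuous_volterraPow hk n; fun_prop)
      ((hasSum_pow_succ_mul_pow_div_factorial M (x - y)).summable.mul_left M)
      (fun n s hs => ?_) fun s hs => (hasSum_volterraPow hk hkM (hI ▸ hs).1.le).mul_left _
    rw [hI] at hs
    rw [norm_mul]
    exact mul_le_mul (hkM _)
      (abs_volterraPow_le_of_sub_le hk hkM n hs.1.le (by linarith [hs.2])) (abs_nonneg _) hM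
  linarith [(hasSum_volterraPow_succ hk hkM hyx).unique hsum]

end Resolvent

def unitTriangle : Set (ℝ × ℝ) := {p | 0 ≤ p.2 ∧ p.2 ≤ p.1 ∧ p.1 ≤ 1}

theorem isCompact_unitTriangle : IsCompact unitTriangle := by
  refine isCompact_Icc.of_isClosed_subset ?_ fun p hp => (?_ : p ∈ Icc (0, 0) (1, 1))
  · exact (isClosed_le continuous_const continuous_snd).inter
      ((isClosed_le continuous_snd continuous_fst).inter
        (isClosed_le continuous_fst continuous_const))
  · obtain ⟨h0, hyx, hx1⟩ := hp
    exact ⟨⟨h0.trans hyx, h0⟩, ⟨hx1, hyx.trans hx1⟩⟩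

theorem mem_unitTriangle_of_mem_uIcc {x y s : ℝ} (hxy : (x, y) ∈ unitTriangle)
    (hs : s ∈ uIcc y x) : (x, s) ∈ unitTriangle ∧ (s, y) ∈ unitTriangle := by
  obtain ⟨h0, hyx, hx1⟩ := hxy
  rw [uIcc_of_le hyx] at hs
  exact ⟨⟨h0.trans hs.1, hs.2, hx1⟩, ⟨h0, hs.1, hs.2.trans hx1⟩⟩

def triangleRetraction (p : ℝ × ℝ) : ℝ × ℝ :=
  (min (max p.1 0) 1, min (max p.2 0) (min (max p.1 0) 1))

theorem continuous_triangleRetraction : Continuous triangleRetraction := by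
  unfold triangleRetraction
  fun_prop

theorem triangleRetraction_mem (p : ℝ × ℝ) : triangleRetraction p ∈ unitTriangle :=
  ⟨le_min (le_max_right _ _) (le_min (le_max_right _ _) zero_le_one), min_le_right _ _,
    min_le_right _ _⟩

theorem triangleRetraction_of_mem {p : ℝ × ℝ} (hp : p ∈ unitTriangle) :
    triangleRetraction p = p := by
  obtain ⟨h0, hyx, hx1⟩ := hp
  have hx : min (max p.1 0) 1 = p.1 := by rw [max_eq_left (h0.trans hyx), min_eq_left hx1]
  simp only [triangleRetraction, hx, max_eq_left h0, min_eq_left hyx]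

/-- Existence of the resolvent (inverse) Volterra kernel: for continuous `k` on the triangle
`D = {(x,y) : 0 ≤ y ≤ x ≤ 1}` there is a continuous `l` on `D` satisfying both resolvent
identities `l = k + l ∗ k = k + k ∗ l`, with `sup_D |l| ≤ (sup_D |k|) e^{sup_D |k|}`. -/
theorem stmt_12 (D : Set (ℝ × ℝ))
    (hD : D = {p : ℝ × ℝ | 0 ≤ p.2 ∧ p.2 ≤ p.1 ∧ p.1 ≤ 1})
    (k : ℝ × ℝ → ℝ) (hk : ContinuousOn k D) :
    ∃ l : ℝ × ℝ → ℝ, ContinuousOn l D ∧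
      (∀ x y : ℝ, (x, y) ∈ D →
        (l (x, y) = k (x, y) + ∫ s in y..x, l (x, s) * k (s, y)) ∧
        (l (x, y) = k (x, y) + ∫ s in y..x, k (x, s) * l (s, y))) ∧
      (∀ p ∈ D, |l p| ≤ sSup ((fun q => |k q|) '' D) *
        Real.exp (sSup ((fun q => |k q|) '' D))) := by
  obtain rfl : D = unitTriangle := hD
  set M := sSup ((fun q => |k q|) '' unitTriangle)
  have hkM : ∀ p ∈ unitTriangle, |k p| ≤ M := fun p hp =>
    le_csSup (isCompact_unitTriangle.bddAbove_image hk.abs) ⟨p, hp, rfl⟩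
  set g := k ∘ triangleRetraction
  have hg : Continuous g := hk.comp_continuous continuous_triangleRetraction triangleRetraction_mem
  have hgM : ∀ p, |g p| ≤ M := fun p => hkM _ (triangleRetraction_mem p)
  have hgk : ∀ p ∈ unitTriangle, g p = k p := fun p hp =>
    congrArg k (triangleRetraction_of_mem hp)
  refine ⟨resolventKernel g, (continuousOn_resolventKernel hg hgM 1).mono fun p hp => ?_,
    fun x y hxy => ⟨?_, ?_⟩, fun p hp => ?_⟩
  · exact ⟨hp.2.1, by linarith [hp.1, hp.2.2]⟩
  · change _ = _ + volterraComp (resolventKernel g) k (x, y)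
    rw [← hgk _ hxy, volterraComp_congr (b' := g) (fun _ _ => rfl)
      fun s hs => (hgk _ (mem_unitTriangle_of_mem_uIcc hxy hs).2).symm]
    exact resolventKernel_eq_add_resolventKernel_comp hg hgM hxy.2.1
  · change _ = _ + volterraComp k (resolventKernel g) (x, y)
    rw [← hgk _ hxy, volterraComp_congr (a' := g)
      (fun s hs => (hgk _ (mem_unitTriangle_of_mem_uIcc hxy hs).1).symm) fun _ _ => rfl]
    exact resolventKernel_eq_add_comp_resolventKernel hg hgM hxy.2.1
  · have hM : 0 ≤ M := (abs_nonneg _).trans (hgM 0)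
    calc |resolventKernel g p| ≤ M * Real.exp (M * (p.1 - p.2)) :=
          abs_resolventKernel_le hg hgM hp.2.1
      _ ≤ M * Real.exp M := by
        gcongr
        exact mul_le_of_le_one_right hM (by linarith [hp.1, hp.2.2])
end

section
/- Let a > 0, c, and λ be real constants with λ + c > 0, and set μ := (λ + c)/a. Define k : ℝ² → ℝ by k(x,y) := −(μ/2)·y·Σ_{m=0}^∞ (μ(x²−y²)/4)^m / (m!·(m+1)!), which equals −μ·y·I₁(√(μ(x²−y²)))/√(μ(x²−y²)) where I₁ is the first-order modified Bessel function I₁(z) = Σ_{m=0}^∞ (z/2)^{2m+1}/(m!(m+1)!). Then k is infinitely differentiable on ℝ² and satisfies: (i) a·(∂²k/∂x²)(x,y) − a·(∂²k/∂y²)(x,y) = (λ + c)·k(x,y) for all (x,y) ∈ ℝ²; (ii) k(x,0) = 0 for all x; and (iii) k(x,x) = −((λ + c)/(2a))·x for all x, so that 2a·(d/dx)[k(x,x)] = −(λ + c). -/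
/-!
Write `k(x, y) = y G(x² − y²)` with `G(s) = −(μ/2) F₀(μ s / 4)`, where
`F_j(t) = ∑ₘ tᵐ / (m! (m + j + 1)!)`. For any `G`, the wave operator `∂ₓ² − ∂ᵧ²` sends
`y G(x² − y²)` to `y (4 s G''(s) + 8 G'(s))` at `s = x² − y²`. Termwise differentiation gives
`F_j' = F_{j+1}`, and the Bessel recurrence `t F₂(t) + 2 F₁(t) = F₀(t)` turns `4 s G'' + 8 G'`
into `μ G`. On the diagonal `s = 0`, and `F₀(0) = 1`.
-/

open Nat

/-- `I_{j+1}(z) = (z/2)^(j+1) * besselSeries j (z^2/4)`. -/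
noncomputable def besselSeries (j : ℕ) (t : ℝ) : ℝ :=
  ∑' m : ℕ, t ^ m / ((m ! : ℝ) * ((m + j + 1)! : ℝ))

namespace besselSeries

lemma norm_term_le (j : ℕ) (t : ℝ) (m : ℕ) :
    ‖t ^ m / ((m ! : ℝ) * ((m + j + 1)! : ℝ))‖ ≤ |t| ^ m / m ! := by
  have hpos : (0 : ℝ) < m ! * (m + j + 1)! := by positivity
  rw [Real.norm_eq_abs, abs_div, abs_pow, abs_of_pos hpos]
  gcongr
  exact le_mul_of_one_le_right (by positivity) (mod_cast (m + j + 1).factorial_pos)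

lemma summable_term (j : ℕ) (t : ℝ) :
    Summable fun m : ℕ => t ^ m / ((m ! : ℝ) * ((m + j + 1)! : ℝ)) :=
  .of_norm_bounded (Real.summable_pow_div_factorial |t|) (norm_term_le j t)

lemma norm_deriv_term_le (j : ℕ) {R s : ℝ} (hs : |s| ≤ R) (m : ℕ) :
    ‖m * s ^ (m - 1) / ((m ! : ℝ) * ((m + j + 1)! : ℝ))‖ ≤ m * R ^ (m - 1) / m ! := by
  have hR : 0 ≤ R := (abs_nonneg s).trans hs
  have hpos : (0 : ℝ) < m ! * (m + j + 1)! := by positivity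
  rw [Real.norm_eq_abs, abs_div, abs_mul, abs_pow, Nat.abs_cast, abs_of_pos hpos]
  gcongr ?_ * ?_ / ?_
  · gcongr
  · exact le_mul_of_one_le_right (by positivity) (mod_cast (m + j + 1).factorial_pos)

lemma summable_deriv_bound (R : ℝ) :
    Summable fun m : ℕ => m * R ^ (m - 1) / m ! := by
  rw [← summable_nat_add_iff 1]
  refine (Real.summable_pow_div_factorial R).congr fun n => ?_
  rw [factorial_succ]
  push_cast
  field_simp

lemma hasSum_deriv_term (j : ℕ) (t : ℝ) :
    HasSum (fun m : ℕ => m * t ^ (m - 1) / ((m ! : ℝ) * ((m + j + 1)! : ℝ)))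
      (besselSeries (j + 1) t) := by
  refine (hasSum_nat_add_iff' 1).1 ?_
  simp only [Finset.range_one, Finset.sum_singleton, CharP.cast_eq_zero, zero_mul, zero_div,
    sub_zero]
  refine (summable_term (j + 1) t).hasSum.congr_fun fun n => ?_
  rw [show n + 1 + j + 1 = n + (j + 1) + 1 by omega, factorial_succ n]
  push_cast
  field_simp

theorem hasDerivAt (j : ℕ) (t : ℝ) : HasDerivAt (besselSeries j) (besselSeries (j + 1) t) t := by
  set R := |t| + 1
  have hball : ∀ s ∈ Metric.ball (0 : ℝ) R, |s| ≤ R := fun s hs => by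
    simpa [Real.dist_eq] using (Metric.mem_ball.1 hs).le
  have hderiv := hasDerivAt_tsum_of_isPreconnected (y := t) (summable_deriv_bound R)
    Metric.isOpen_ball (convex_ball (0 : ℝ) R).isPreconnected
    (fun m s _ => (hasDerivAt_pow m s).div_const ((m ! : ℝ) * ((m + j + 1)! : ℝ)))
    (fun m s hs => norm_deriv_term_le j (hball s hs) m)
    (Metric.mem_ball_self (by positivity)) (summable_term j 0)
    (by simp [R])
  rwa [(hasSum_deriv_term j t).tsum_eq] at hderiv

theorem deriv_eq (j : ℕ) : deriv (besselSeries j) = besselSeries (j + 1) :=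
  funext fun t => (hasDerivAt j t).deriv

theorem iteratedDeriv_eq (n j : ℕ) : iteratedDeriv n (besselSeries j) = besselSeries (j + n) := by
  induction n generalizing j with
  | zero => rfl
  | succ n ih => rw [iteratedDeriv_succ', deriv_eq, ih, add_right_comm, add_assoc]

theorem contDiff (j : ℕ) {n : ℕ∞} : ContDiff ℝ n (besselSeries j) :=
  contDiff_of_differentiable_iteratedDeriv fun m _ => by
    rw [iteratedDeriv_eq]
    exact fun t => (hasDerivAt _ t).differentiableAt

theorem apply_zero (j : ℕ) : besselSeries j 0 = 1 / (j + 1)! := by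
  rw [besselSeries, tsum_eq_single 0 fun m hm => by simp [zero_pow hm]]
  simp

theorem recurrence (j : ℕ) (t : ℝ) :
    t * besselSeries (j + 2) t + (j + 2) * besselSeries (j + 1) t = besselSeries j t := by
  refine (((hasSum_deriv_term (j + 1) t).mul_left t).add
    ((summable_term (j + 1) t).hasSum.mul_left ((j : ℝ) + 2))).unique ?_
  refine (summable_term j t).hasSum.congr_fun fun m => ?_
  have hfac : ((m + (j + 1) + 1)! : ℝ) = (m + j + 2) * (m + j + 1)! := by
    rw [show m + (j + 1) + 1 = (m + j + 1) + 1 by omega, factorial_succ]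
    push_cast
    ring
  have hpow : t * (m * t ^ (m - 1)) = m * t ^ m := by
    cases m with
    | zero => simp
    | succ m => rw [add_tsub_cancel_right, pow_succ]; ring
  rw [mul_div_assoc', hpow, hfac]
  field_simp
  ring

theorem hasDerivAt_comp_mul_div (j : ℕ) (c s : ℝ) :
    HasDerivAt (fun s => besselSeries j (c * s / 4)) (besselSeries (j + 1) (c * s / 4) * (c / 4))
      s :=
  (hasDerivAt j _).comp s
    ((((hasDerivAt_id' s).const_mul c).div_const 4).congr_deriv (by ring))

end besselSeries

theorem iteratedDeriv_two_eq_of_hasDerivAt {𝕜 F : Type*} [NontriviallyNormedField 𝕜]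
    [NormedAddCommGroup F] [NormedSpace 𝕜 F] {f f' : 𝕜 → F} {f'' : F} {x : 𝕜}
    (hf : ∀ t, HasDerivAt f (f' t) t) (hf' : HasDerivAt f' f'' x) :
    iteratedDeriv 2 f x = f'' := by
  rw [iteratedDeriv_succ, iteratedDeriv_one, funext fun t => (hf t).deriv, hf'.deriv]

theorem iteratedDeriv_two_sub_iteratedDeriv_two_mul_comp_sq_sub_sq {G G' G'' : ℝ → ℝ}
    (hG : ∀ s, HasDerivAt G (G' s) s) (hG' : ∀ s, HasDerivAt G' (G'' s) s) (x y : ℝ) :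
    iteratedDeriv 2 (fun x' => y * G (x' ^ 2 - y ^ 2)) x
      - iteratedDeriv 2 (fun y' => y' * G (x ^ 2 - y' ^ 2)) y
      = y * (4 * (x ^ 2 - y ^ 2) * G'' (x ^ 2 - y ^ 2) + 8 * G' (x ^ 2 - y ^ 2)) := by
  have hsq (t : ℝ) : HasDerivAt (fun t => t ^ 2) (2 * t) t := by
    simpa using hasDerivAt_pow 2 t
  have hxx : iteratedDeriv 2 (fun x' => y * G (x' ^ 2 - y ^ 2)) x
      = y * (4 * x ^ 2 * G'' (x ^ 2 - y ^ 2) + 2 * G' (x ^ 2 - y ^ 2)) :=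
    iteratedDeriv_two_eq_of_hasDerivAt (f' := fun x' => y * (G' (x' ^ 2 - y ^ 2) * (2 * x')))
      (fun x' => ((hG _).comp x' ((hsq x').sub_const _)).const_mul y)
      (((((hG' _).comp x ((hsq x).sub_const _)).mul ((hasDerivAt_id' x).const_mul 2)).const_mul
        y).congr_deriv (by simp only [Function.comp_apply]; ring))
  have hyy : iteratedDeriv 2 (fun y' => y' * G (x ^ 2 - y' ^ 2)) y
      = 4 * y ^ 3 * G'' (x ^ 2 - y ^ 2) - 6 * y * G' (x ^ 2 - y ^ 2) :=
    iteratedDeriv_two_eq_of_hasDerivAt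
      (f' := fun y' => G (x ^ 2 - y' ^ 2) - 2 * y' ^ 2 * G' (x ^ 2 - y' ^ 2))
      (fun y' => ((hasDerivAt_id' y').mul ((hG _).comp y' ((hsq y').const_sub _))).congr_deriv
        (by simp only [Function.comp_apply]; ring))
      ((((hG _).comp y ((hsq y).const_sub _)).sub
        (((hsq y).const_mul 2).mul ((hG' _).comp y ((hsq y).const_sub _)))).congr_deriv
          (by simp only [Function.comp_apply]; ring))
  rw [hxx, hyy]
  ring

noncomputable def besselKernel (μ x y : ℝ) : ℝ :=
  -(μ / 2) * y * besselSeries 0 (μ * (x ^ 2 - y ^ 2) / 4)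

namespace besselKernel

theorem contDiff (μ : ℝ) {n : ℕ∞} : ContDiff ℝ n (fun p : ℝ × ℝ => besselKernel μ p.1 p.2) :=
  (contDiff_const.mul contDiff_snd).mul ((besselSeries.contDiff 0).comp (by fun_prop))

theorem apply_zero_right (μ x : ℝ) : besselKernel μ x 0 = 0 := by
  simp [besselKernel]

theorem apply_diag (μ x : ℝ) : besselKernel μ x x = -(μ / 2) * x := by
  simp [besselKernel, besselSeries.apply_zero]

theorem iteratedDeriv_two_sub_iteratedDeriv_two (μ x y : ℝ) :
    iteratedDeriv 2 (fun x' => besselKernel μ x' y) x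
      - iteratedDeriv 2 (fun y' => besselKernel μ x y') y = μ * besselKernel μ x y := by
  have hG (s : ℝ) := (besselSeries.hasDerivAt_comp_mul_div 0 μ s).const_mul (-(μ / 2))
  have hG' (s : ℝ) :=
    ((besselSeries.hasDerivAt_comp_mul_div 1 μ s).mul_const (μ / 4)).const_mul (-(μ / 2))
  have hwave := iteratedDeriv_two_sub_iteratedDeriv_two_mul_comp_sq_sub_sq hG hG' x y
  have hx : (fun x' => besselKernel μ x' y)
      = fun x' => y * (-(μ / 2) * besselSeries 0 (μ * (x' ^ 2 - y ^ 2) / 4)) := by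
    funext x'
    rw [besselKernel]
    ring
  have hy : (fun y' => besselKernel μ x y')
      = fun y' => y' * (-(μ / 2) * besselSeries 0 (μ * (x ^ 2 - y' ^ 2) / 4)) := by
    funext y'
    rw [besselKernel]
    ring
  rw [hx, hy, hwave, besselKernel, ← besselSeries.recurrence 0]
  push_cast
  ring

end besselKernel

theorem stmt_14_general (a c lam μ : ℝ) (ha : 0 < a)
    (hμ : μ = (lam + c) / a)
    (k : ℝ → ℝ → ℝ)
    (hk : ∀ x y : ℝ, k x y =
      -(μ / 2) * y * ∑' m : ℕ, (μ * (x ^ 2 - y ^ 2) / 4) ^ m /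
        ((Nat.factorial m : ℝ) * (Nat.factorial (m + 1) : ℝ))) :
    ContDiff ℝ (⊤ : ℕ∞) (fun p : ℝ × ℝ => k p.1 p.2) ∧
    (∀ x y : ℝ, a * iteratedDeriv 2 (fun x' => k x' y) x
        - a * iteratedDeriv 2 (fun y' => k x y') y = (lam + c) * k x y) ∧
    (∀ x : ℝ, k x 0 = 0) ∧
    (∀ x : ℝ, k x x = -((lam + c) / (2 * a)) * x) ∧
    (∀ x : ℝ, 2 * a * deriv (fun ξ => k ξ ξ) x = -(lam + c)) := by
  obtain rfl : k = besselKernel μ := funext fun x => funext (hk x)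
  have hdiag (x : ℝ) : besselKernel μ x x = -((lam + c) / (2 * a)) * x := by
    rw [besselKernel.apply_diag, hμ, div_div, mul_comm a]
  refine ⟨besselKernel.contDiff μ, fun x y => ?_, besselKernel.apply_zero_right μ, hdiag,
    fun x => ?_⟩
  · rw [← mul_sub, besselKernel.iteratedDeriv_two_sub_iteratedDeriv_two, hμ]
    field_simp
  · rw [funext hdiag, deriv_const_mul_field', deriv_id'']
    field_simp

/-- For constants `a > 0`, `c`, `λ` with `λ + c > 0` and `μ = (λ+c)/a`, the kernel
`k(x,y) = -(μ/2) y ∑_{m≥0} (μ(x²-y²)/4)^m/(m!(m+1)!)`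
(`= -μ y I₁(√(μ(x²-y²)))/√(μ(x²-y²))`) is smooth on `ℝ²` and satisfies
(i) `a k_xx - a k_yy = (λ+c) k`; (ii) `k(x,0) = 0`; (iii) `k(x,x) = -((λ+c)/(2a)) x`,
so that `2a (d/dx)[k(x,x)] = -(λ+c)`. -/
theorem stmt_14 (a c lam μ : ℝ) (ha : 0 < a) (hlc : 0 < lam + c)
    (hμ : μ = (lam + c) / a)
    (k : ℝ → ℝ → ℝ)
    (hk : ∀ x y : ℝ, k x y =
      -(μ / 2) * y * ∑' m : ℕ, (μ * (x ^ 2 - y ^ 2) / 4) ^ m /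
        ((Nat.factorial m : ℝ) * (Nat.factorial (m + 1) : ℝ))) :
    ContDiff ℝ (⊤ : ℕ∞) (fun p : ℝ × ℝ => k p.1 p.2) ∧
    (∀ x y : ℝ, a * iteratedDeriv 2 (fun x' => k x' y) x
        - a * iteratedDeriv 2 (fun y' => k x y') y = (lam + c) * k x y) ∧
    (∀ x : ℝ, k x 0 = 0) ∧
    (∀ x : ℝ, k x x = -((lam + c) / (2 * a)) * x) ∧
    (∀ x : ℝ, 2 * a * deriv (fun ξ => k ξ ξ) x = -(lam + c)) :=
  stmt_14_general a c lam μ ha hμ k hk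
end

section
/- Let a > 0, c, and λ be real constants with λ + c > 0, and set μ := (λ + c)/a. Define l : ℝ² → ℝ by l(x,y) := −(μ/2)·y·Σ_{m=0}^∞ (−1)^m·(μ(x²−y²)/4)^m / (m!·(m+1)!), which equals −μ·y·J₁(√(μ(x²−y²)))/√(μ(x²−y²)) where J₁ is the first-order Bessel function J₁(z) = Σ_{m=0}^∞ (−1)^m (z/2)^{2m+1}/(m!(m+1)!). Then l is infinitely differentiable on ℝ² and satisfies: (i) a·(∂²l/∂x²)(x,y) − a·(∂²l/∂y²)(x,y) = −(λ + c)·l(x,y) for all (x,y) ∈ ℝ²; (ii) l(x,0) = 0 for all x; and (iii) l(x,x) = −((λ + c)/(2a))·x for all x, so that 2a·(d/dx)[l(x,x)] = −(λ + c). -/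
/-!
Write `l(x, y) = -(μ/2) y G(μ (x² - y²)/4)` with `G(t) = ∑ (-1)^m t^m / (m! (m+1)!)`.
The coefficients of `G` decay like `1/m!`, a property inherited by the coefficients of `G'`, so
`G` is entire and may be differentiated termwise to any order. The recursion
`(m+1)(m+2) c_{m+1} = -c_m` of its coefficients is the Bessel-type equation
`t G'' + 2 G' + G = 0`, and for any such `G` the wave operator maps `y G(κ (x² - y²))` to
`-4κ y G(κ (x² - y²))`. The boundary values follow from `G(0) = 1`.
-/

open Nat

namespace FactorialSeries

variable {𝕜 : Type*} [RCLike 𝕜]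

def FactorialBounded (c : ℕ → 𝕜) (K : ℝ) : Prop := ∀ m, ‖c m‖ ≤ K / m !

noncomputable def powerSum (c : ℕ → 𝕜) (z : 𝕜) : 𝕜 := ∑' m, c m * z ^ m

def derivCoeff (c : ℕ → 𝕜) (m : ℕ) : 𝕜 := (m + 1) * c (m + 1)

lemma powerSum_zero (c : ℕ → 𝕜) : powerSum c 0 = c 0 := by
  rw [powerSum, tsum_eq_single 0 fun m hm => by simp [zero_pow hm]]
  simp

variable {c : ℕ → 𝕜} {K : ℝ}

namespace FactorialBounded

lemma derivCoeff (hc : FactorialBounded c K) : FactorialBounded (derivCoeff c) K := by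
  intro m
  have hm : (0 : ℝ) < m ! := by positivity
  calc ‖FactorialSeries.derivCoeff c m‖ = (m + 1) * ‖c (m + 1)‖ := by
        rw [FactorialSeries.derivCoeff, norm_mul]; norm_cast
    _ ≤ (m + 1) * (K / (m + 1)!) := by gcongr; exact hc _
    _ = K / m ! := by rw [factorial_succ]; push_cast; field_simp

lemma norm_mul_pow_le (hc : FactorialBounded c K) {z : 𝕜} {R : ℝ} (hz : ‖z‖ ≤ R) (m : ℕ) :
    ‖c m * z ^ m‖ ≤ K * (R ^ m / m !) :=
  calc ‖c m * z ^ m‖ = ‖c m‖ * ‖z‖ ^ m := by rw [norm_mul, norm_pow]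
    _ ≤ K / m ! * R ^ m :=
      mul_le_mul (hc m) (pow_le_pow_left₀ (norm_nonneg z) hz m) (by positivity)
        ((norm_nonneg _).trans (hc m))
    _ = K * (R ^ m / m !) := by ring

lemma summable (hc : FactorialBounded c K) (z : 𝕜) : Summable fun m => c m * z ^ m :=
  .of_norm_bounded ((Real.summable_pow_div_factorial ‖z‖).mul_left K) (hc.norm_mul_pow_le le_rfl)

-- Peeling off the constant term makes the termwise derivatives exactly `derivCoeff c m * z ^ m`.
lemma hasDerivAt_powerSum (hc : FactorialBounded c K) (z : 𝕜) :
    HasDerivAt (powerSum c) (powerSum (FactorialSeries.derivCoeff c) z) z := by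
  have hshift : powerSum c = fun w => c 0 + ∑' m, c (m + 1) * w ^ (m + 1) := by
    funext w; rw [powerSum, (hc.summable w).tsum_eq_zero_add]; simp
  have hderiv : ∀ m w, HasDerivAt (fun w => c (m + 1) * w ^ (m + 1))
      (FactorialSeries.derivCoeff c m * w ^ m) w := fun m w =>
    ((hasDerivAt_pow (m + 1) w).const_mul (c (m + 1))).congr_deriv <| by
      rw [Nat.add_sub_cancel, FactorialSeries.derivCoeff]; push_cast; ring
  have hz : z ∈ Metric.ball (0 : 𝕜) (‖z‖ + 1) := by simp
  rw [hshift]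
  exact (hasDerivAt_tsum_of_isPreconnected
    ((Real.summable_pow_div_factorial (‖z‖ + 1)).mul_left K) Metric.isOpen_ball
    (convex_ball 0 _).isPreconnected (fun m w _ => hderiv m w)
    (fun m w hw => hc.derivCoeff.norm_mul_pow_le (by simpa using (mem_ball_zero_iff.1 hw).le) m)
    hz
    ((summable_nat_add_iff (f := fun m => c m * z ^ m) 1).2 (hc.summable z)) hz).const_add _

lemma deriv_powerSum (hc : FactorialBounded c K) :
    deriv (powerSum c) = powerSum (FactorialSeries.derivCoeff c) :=
  funext fun z => (hc.hasDerivAt_powerSum z).deriv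

lemma differentiable_powerSum (hc : FactorialBounded c K) : Differentiable 𝕜 (powerSum c) :=
  fun z => (hc.hasDerivAt_powerSum z).differentiableAt

lemma contDiff_powerSum (hc : FactorialBounded c K) {n : ℕ∞} : ContDiff 𝕜 n (powerSum c) := by
  suffices h : ∀ n : ℕ, ∀ c : ℕ → 𝕜, FactorialBounded c K → ContDiff 𝕜 n (powerSum c) from
    (contDiff_infty.2 fun n => h n c hc).of_le (by exact_mod_cast le_top)
  intro n
  induction n with
  | zero => exact fun c hc => contDiff_zero.2 hc.differentiable_powerSum.continuous
  | succ n ih =>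
    exact fun c hc => contDiff_succ_iff_deriv.2 ⟨hc.differentiable_powerSum, by simp,
      hc.deriv_powerSum ▸ ih _ hc.derivCoeff⟩

lemma mul_powerSum_derivCoeff (hc : FactorialBounded c K) (z : 𝕜) :
    z * powerSum (FactorialSeries.derivCoeff c) z = powerSum (fun m => m * c m) z := by
  rw [powerSum, powerSum, ← tsum_mul_left, tsum_eq_zero_add' (f := fun m => m * c m * z ^ m)]
  · rw [cast_zero, zero_mul, zero_mul, zero_add]
    exact tsum_congr fun m => by rw [FactorialSeries.derivCoeff]; push_cast; ring
  · exact ((hc.derivCoeff.summable z).mul_left z).congr fun m => by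
      rw [FactorialSeries.derivCoeff]; push_cast; ring

end FactorialBounded

end FactorialSeries

section
variable {𝕜 F : Type*} [NontriviallyNormedField 𝕜] [NormedAddCommGroup F] [NormedSpace 𝕜 F]

lemma iteratedDeriv_two_of_hasDerivAt {f f' : 𝕜 → F} {f'' : F} {x : 𝕜}
    (hf : ∀ y, HasDerivAt f (f' y) y) (hf' : HasDerivAt f' f'' x) : iteratedDeriv 2 f x = f'' := by
  rw [iteratedDeriv_succ, iteratedDeriv_one, funext fun y => (hf y).deriv, hf'.deriv]

end

section
variable {G G' G'' : ℝ → ℝ} (hG : ∀ u, HasDerivAt G (G' u) u) (hG' : ∀ u, HasDerivAt G' (G'' u) u)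
include hG hG'

lemma iteratedDeriv_two_mul_comp_sq_sub (B κ b x : ℝ) :
    iteratedDeriv 2 (fun x => B * G (κ * (x ^ 2 - b))) x =
      B * (4 * κ ^ 2 * x ^ 2 * G'' (κ * (x ^ 2 - b)) + 2 * κ * G' (κ * (x ^ 2 - b))) := by
  have hu : ∀ s : ℝ, HasDerivAt (fun s => κ * (s ^ 2 - b)) (2 * κ * s) s := fun s =>
    (((hasDerivAt_pow 2 s).sub_const b).const_mul κ).congr_deriv (by push_cast; ring)
  refine iteratedDeriv_two_of_hasDerivAt (f' := fun s => B * (G' (κ * (s ^ 2 - b)) * (2 * κ * s)))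
    (fun s => ((hG _).comp s (hu s)).const_mul B) ?_
  exact ((((hG' _).comp x (hu x)).mul ((hasDerivAt_id x).const_mul (2 * κ))).const_mul
    B).congr_deriv (by simp only [id, Function.comp]; ring)

lemma iteratedDeriv_two_mul_self_comp_sub_sq (B κ a y : ℝ) :
    iteratedDeriv 2 (fun y => B * y * G (κ * (a - y ^ 2))) y =
      B * (4 * κ ^ 2 * y ^ 3 * G'' (κ * (a - y ^ 2)) - 6 * κ * y * G' (κ * (a - y ^ 2))) := by
  have hu : ∀ s : ℝ, HasDerivAt (fun s => κ * (a - s ^ 2)) (-(2 * κ * s)) s := fun s =>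
    (((hasDerivAt_pow 2 s).const_sub a).const_mul κ).congr_deriv (by push_cast; ring)
  refine iteratedDeriv_two_of_hasDerivAt
    (f' := fun s => B * (G (κ * (a - s ^ 2)) - 2 * κ * s ^ 2 * G' (κ * (a - s ^ 2))))
    (fun s => (((hasDerivAt_id s).const_mul B).mul ((hG _).comp s (hu s))).congr_deriv
      (by simp only [id, Function.comp]; ring)) ?_
  exact (((hG _).comp y (hu y)).sub (((hasDerivAt_pow 2 y).const_mul (2 * κ)).mul
    ((hG' _).comp y (hu y)))).const_mul B |>.congr_deriv
      (by simp only [Function.comp]; push_cast; ring)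

-- The wave operator maps `y G(u)`, `u = κ (x² - y²)`, to `4 κ y (u G''(u) + 2 G'(u))`.
theorem wave_mul_self_comp_sq_sub_sq (hode : ∀ u, u * G'' u + 2 * G' u + G u = 0) (A κ x y : ℝ) :
    iteratedDeriv 2 (fun x => A * y * G (κ * (x ^ 2 - y ^ 2))) x
      - iteratedDeriv 2 (fun y => A * y * G (κ * (x ^ 2 - y ^ 2))) y
      = -(4 * κ) * (A * y * G (κ * (x ^ 2 - y ^ 2))) := by
  rw [iteratedDeriv_two_mul_comp_sq_sub hG hG', iteratedDeriv_two_mul_self_comp_sub_sq hG hG']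
  linear_combination (4 * κ * A * y) * hode (κ * (x ^ 2 - y ^ 2))

end

open FactorialSeries

-- `powerSum besselCoeff (z ^ 2 / 4) = 2 J₁(z) / z`.
noncomputable def besselCoeff (m : ℕ) : ℝ := (-1) ^ m / (m ! * (m + 1)!)

lemma factorialBounded_besselCoeff : FactorialBounded besselCoeff 1 := fun m => by
  have h1 : (1 : ℝ) ≤ (m + 1)! := mod_cast (m + 1).factorial_pos
  rw [besselCoeff, norm_div, norm_pow, norm_neg, norm_one, one_pow, Real.norm_eq_abs,
    abs_of_pos (by positivity)]
  exact one_div_le_one_div_of_le (by positivity) (le_mul_of_one_le_right (by positivity) h1)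

lemma besselCoeff_succ (m : ℕ) : (m + 1) * (m + 2) * besselCoeff (m + 1) = -besselCoeff m := by
  simp only [besselCoeff, factorial_succ, pow_succ]
  push_cast
  field_simp
  ring

theorem powerSum_besselCoeff_ode (t : ℝ) :
    t * powerSum (derivCoeff (derivCoeff besselCoeff)) t
      + 2 * powerSum (derivCoeff besselCoeff) t + powerSum besselCoeff t = 0 := by
  have hb := factorialBounded_besselCoeff
  have hcoeff : ∀ m : ℕ, m * derivCoeff besselCoeff m * t ^ m
      = -(2 * (derivCoeff besselCoeff m * t ^ m) + besselCoeff m * t ^ m) := fun m => by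
    rw [derivCoeff]
    linear_combination t ^ m * besselCoeff_succ m
  rw [hb.derivCoeff.mul_powerSum_derivCoeff, powerSum, powerSum, powerSum, tsum_congr hcoeff,
    tsum_neg, (hb.derivCoeff.summable t).mul_left 2 |>.tsum_add (hb.summable t), tsum_mul_left]
  ring

theorem stmt_15_general (a c lam μ : ℝ) (ha : 0 < a)
    (hμ : μ = (lam + c) / a)
    (l : ℝ → ℝ → ℝ)
    (hl : ∀ x y : ℝ, l x y =
      -(μ / 2) * y * ∑' m : ℕ, (-1 : ℝ) ^ m * (μ * (x ^ 2 - y ^ 2) / 4) ^ m /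
        ((Nat.factorial m : ℝ) * (Nat.factorial (m + 1) : ℝ))) :
    ContDiff ℝ (⊤ : ℕ∞) (fun p : ℝ × ℝ => l p.1 p.2) ∧
    (∀ x y : ℝ, a * iteratedDeriv 2 (fun x' => l x' y) x
        - a * iteratedDeriv 2 (fun y' => l x y') y = -(lam + c) * l x y) ∧
    (∀ x : ℝ, l x 0 = 0) ∧
    (∀ x : ℝ, l x x = -((lam + c) / (2 * a)) * x) ∧
    (∀ x : ℝ, 2 * a * deriv (fun ξ => l ξ ξ) x = -(lam + c)) := by
  have hb := factorialBounded_besselCoeff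
  have hlg : ∀ x y, l x y = -(μ / 2) * y * powerSum besselCoeff (μ / 4 * (x ^ 2 - y ^ 2)) :=
    fun x y => by
      rw [hl, powerSum]
      exact congrArg _ (tsum_congr fun m => by rw [besselCoeff]; ring)
  have hdiag : ∀ x, l x x = -((lam + c) / (2 * a)) * x := fun x => by
    rw [hlg, sub_self, mul_zero, powerSum_zero, besselCoeff, hμ]
    simp only [pow_zero, factorial_zero, zero_add, factorial_one, cast_one]
    ring
  refine ⟨?_, fun x y => ?_, fun x => by simp [hlg], hdiag, fun x => ?_⟩
  · simp only [hlg]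
    exact (contDiff_const.mul contDiff_snd).mul (hb.contDiff_powerSum.comp (by fun_prop))
  · have hwave := wave_mul_self_comp_sq_sub_sq hb.hasDerivAt_powerSum
      hb.derivCoeff.hasDerivAt_powerSum powerSum_besselCoeff_ode (-(μ / 2)) (μ / 4) x y
    have haμ : a * μ = lam + c := by rw [hμ]; field_simp
    simp only [hlg, ← haμ]
    linear_combination a * hwave
  · rw [funext hdiag, deriv_const_mul_field', deriv_id'']
    field_simp

/-- For constants `a > 0`, `c`, `λ` with `λ + c > 0` and `μ = (λ+c)/a`, the inverse kernel
`l(x,y) = -(μ/2) y ∑_{m≥0} (-1)^m (μ(x²-y²)/4)^m/(m!(m+1)!)`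
(`= -μ y J₁(√(μ(x²-y²)))/√(μ(x²-y²))`) is smooth on `ℝ²` and satisfies
(i) `a l_xx - a l_yy = -(λ+c) l`; (ii) `l(x,0) = 0`; (iii) `l(x,x) = -((λ+c)/(2a)) x`,
so that `2a (d/dx)[l(x,x)] = -(λ+c)`. -/
theorem stmt_15 (a c lam μ : ℝ) (ha : 0 < a) (hlc : 0 < lam + c)
    (hμ : μ = (lam + c) / a)
    (l : ℝ → ℝ → ℝ)
    (hl : ∀ x y : ℝ, l x y =
      -(μ / 2) * y * ∑' m : ℕ, (-1 : ℝ) ^ m * (μ * (x ^ 2 - y ^ 2) / 4) ^ m /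
        ((Nat.factorial m : ℝ) * (Nat.factorial (m + 1) : ℝ))) :
    ContDiff ℝ (⊤ : ℕ∞) (fun p : ℝ × ℝ => l p.1 p.2) ∧
    (∀ x y : ℝ, a * iteratedDeriv 2 (fun x' => l x' y) x
        - a * iteratedDeriv 2 (fun y' => l x y') y = -(lam + c) * l x y) ∧
    (∀ x : ℝ, l x 0 = 0) ∧
    (∀ x : ℝ, l x x = -((lam + c) / (2 * a)) * x) ∧
    (∀ x : ℝ, 2 * a * deriv (fun ξ => l ξ ξ) x = -(lam + c)) :=
  stmt_15_general a c lam μ ha hμ l hl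
end
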